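/- arXiv:nlin/0208002 — 2 statements merged into one kernel-verified Lean document; each statement's English description precedes it below -/
import Mathlib

section
/- Let Q be a semi-infinite banded matrix (Q_{i,j} = 0 for |i-j| > b), let x be a scalar, and let ψ = (ψ_n)_{n≥0} and φ = (φ_n)_{n≥0} be sequences satisfying x·ψ_n = ∑_m Q_{n,m} ψ_m and x·φ_m = ∑_n φ_n Q_{n,m} for all n, m (all sums finite by bandedness). Then for every N ≥ 0, the quantity S_N := ∑_{i,j} φ_i ([Π^N, Q])_{i,j} ψ_j is independent of N, i.e. S_{N+1} = S_N for all N. -/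
/-- The Christoffel–Darboux pairing `S_N = Φ [Π^N, Q] Ψ` between dual eigenvectors of a banded
matrix `Q` with the same eigenvalue `x` is independent of `N`. -/
theorem christoffel_darboux_pairing_constant {R : Type*} [CommRing R]
    (Q : ℕ → ℕ → R) (b : ℕ) (x : R) (ψ φ : ℕ → R)
    (hband : ∀ i j : ℕ, b < Int.natAbs ((i : ℤ) - (j : ℤ)) → Q i j = 0)
    (hψ : ∀ n : ℕ, x * ψ n = ∑ m ∈ Finset.Iic (n + b), Q n m * ψ m)
    (hφ : ∀ m : ℕ, x * φ m = ∑ n ∈ Finset.Iic (m + b), φ n * Q n m) :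
    ∀ N : ℕ,
      (∑ i ∈ Finset.Iic (N + 1 + b), ∑ j ∈ Finset.Iic (N + 1 + b),
          φ i * ((if i ≤ N + 1 then Q i j else 0) - (if j ≤ N + 1 then Q i j else 0)) * ψ j)
        = ∑ i ∈ Finset.Iic (N + b), ∑ j ∈ Finset.Iic (N + b),
          φ i * ((if i ≤ N then Q i j else 0) - (if j ≤ N then Q i j else 0)) * ψ j := by
  have key : ∀ N : ℕ, (∑ i ∈ Finset.Iic (N + b), ∑ j ∈ Finset.Iic (N + b),
      φ i * ((if i ≤ N then Q i j else 0) - (if j ≤ N then Q i j else 0)) * ψ j) = 0 := by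
    intro N
    have h1 : ∀ i : ℕ, i ≤ N →
        ∑ j ∈ Finset.Iic (N + b), Q i j * ψ j = x * ψ i := by
      intro i hi
      rw [hψ i]
      symm
      apply Finset.sum_subset
      · intro j hj; simp only [Finset.mem_Iic] at hj ⊢; omega
      · intro j hj hj'
        simp only [Finset.mem_Iic] at hj hj'
        have : Q i j = 0 := hband i j (by omega)
        simp [this]
    have h2 : ∀ j : ℕ, j ≤ N →
        ∑ i ∈ Finset.Iic (N + b), φ i * Q i j = x * φ j := by
      intro j hj
      rw [hφ j]
      symm
      apply Finset.sum_subset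
      · intro i hi; simp only [Finset.mem_Iic] at hi ⊢; omega
      · intro i hi hi'
        simp only [Finset.mem_Iic] at hi hi'
        have : Q i j = 0 := hband i j (by omega)
        simp [this]
    have expand : (∑ i ∈ Finset.Iic (N + b), ∑ j ∈ Finset.Iic (N + b),
        φ i * ((if i ≤ N then Q i j else 0) - (if j ≤ N then Q i j else 0)) * ψ j)
        = (∑ i ∈ Finset.Iic (N + b), ∑ j ∈ Finset.Iic (N + b),
            φ i * (if i ≤ N then Q i j else 0) * ψ j)
          - (∑ i ∈ Finset.Iic (N + b), ∑ j ∈ Finset.Iic (N + b),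
            φ i * (if j ≤ N then Q i j else 0) * ψ j) := by
      rw [← Finset.sum_sub_distrib]
      apply Finset.sum_congr rfl
      intro i _
      rw [← Finset.sum_sub_distrib]
      apply Finset.sum_congr rfl
      intro j _
      ring
    rw [expand]
    have e1 : (∑ i ∈ Finset.Iic (N + b), ∑ j ∈ Finset.Iic (N + b),
        φ i * (if i ≤ N then Q i j else 0) * ψ j)
        = ∑ i ∈ Finset.Iic (N + b), (if i ≤ N then φ i * (x * ψ i) else 0) := by
      apply Finset.sum_congr rfl
      intro i _
      by_cases h : i ≤ N
      · simp only [h, if_true]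
        rw [← h1 i h, Finset.mul_sum]
        apply Finset.sum_congr rfl
        intro j _
        ring
      · simp [h]
    have e2 : (∑ i ∈ Finset.Iic (N + b), ∑ j ∈ Finset.Iic (N + b),
        φ i * (if j ≤ N then Q i j else 0) * ψ j)
        = ∑ j ∈ Finset.Iic (N + b), (if j ≤ N then φ j * (x * ψ j) else 0) := by
      rw [Finset.sum_comm]
      apply Finset.sum_congr rfl
      intro j _
      by_cases h : j ≤ N
      · simp only [h, if_true]
        have : ∑ i ∈ Finset.Iic (N + b), φ i * Q i j * ψ j
            = (∑ i ∈ Finset.Iic (N + b), φ i * Q i j) * ψ j := by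
          rw [Finset.sum_mul]
        rw [this, h2 j h]
        ring
      · simp [h]
    rw [e1, e2, sub_self]
  intro N
  rw [key N]
  have := key (N + 1)
  rw [show N + 1 + b = (N + 1) + b by ring] at *
  exact this
end

section
/- Let Q be a semi-infinite banded matrix, x, x' scalars, and ψ, φ sequences with x·ψ_n = (Qψ)_n and x'·φ_m = (φQ)_m for all indices. Then for every N ≥ 1: (x' - x) · ∑_{n=0}^{N-1} φ_n ψ_n = - ∑_{i,j} φ_i ([Π^{N-1}, Q])_{i,j} ψ_j, where Π^{N-1} projects onto coordinates 0,…,N-1. -/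
/-- Abstract Christoffel–Darboux formula:
`(x' - x)·∑_{n<N} φ_n ψ_n = - Φ [Π^{N-1}, Q] Ψ` for right and left eigenvectors of the banded
matrix `Q` with eigenvalues `x` and `x'` respectively. -/
theorem christoffel_darboux_formula {R : Type*} [CommRing R]
    (Q : ℕ → ℕ → R) (b : ℕ) (x x' : R) (ψ φ : ℕ → R)
    (hband : ∀ i j : ℕ, b < Int.natAbs ((i : ℤ) - (j : ℤ)) → Q i j = 0)
    (hψ : ∀ n : ℕ, x * ψ n = ∑ m ∈ Finset.Iic (n + b), Q n m * ψ m)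
    (hφ : ∀ m : ℕ, x' * φ m = ∑ n ∈ Finset.Iic (m + b), φ n * Q n m)
    (N : ℕ) (hN : 1 ≤ N) :
    (x' - x) * ∑ n ∈ Finset.range N, φ n * ψ n =
      - ∑ i ∈ Finset.Iic (N + b), ∑ j ∈ Finset.Iic (N + b),
          φ i * ((if i < N then Q i j else 0) - (if j < N then Q i j else 0)) * ψ j := by
  have hle : ∀ j, j < N → Finset.Iic (j + b) ⊆ Finset.Iic (N + b) := by
    intro j hj
    exact Finset.Iic_subset_Iic.2 (by omega)
  have h1 : ∀ j, j < N → ∑ i ∈ Finset.Iic (N + b), φ i * Q i j = x' * φ j := by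
    intro j hj
    rw [hφ j]
    symm
    apply Finset.sum_subset (hle j hj)
    intro i _ hi
    simp only [Finset.mem_Iic, not_le] at hi
    rw [hband i j (by omega), mul_zero]
  have h2 : ∀ i, i < N → ∑ j ∈ Finset.Iic (N + b), Q i j * ψ j = x * ψ i := by
    intro i hi
    rw [hψ i]
    symm
    apply Finset.sum_subset (hle i hi)
    intro j _ hj
    simp only [Finset.mem_Iic, not_le] at hj
    rw [hband i j (by omega), zero_mul]
  have hfilter : Finset.filter (· < N) (Finset.Iic (N + b)) = Finset.range N := by
    ext i
    simp only [Finset.mem_filter, Finset.mem_Iic, Finset.mem_range]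
    omega
  have hsummand : ∀ i j : ℕ,
      φ i * ((if i < N then Q i j else 0) - (if j < N then Q i j else 0)) * ψ j
      = (if i < N then φ i * (Q i j * ψ j) else 0)
        - (if j < N then φ i * Q i j * ψ j else 0) := by
    intro i j
    split <;> split <;> ring
  have hA : ∑ i ∈ Finset.Iic (N + b), ∑ j ∈ Finset.Iic (N + b),
      (if i < N then φ i * (Q i j * ψ j) else 0)
      = x * ∑ n ∈ Finset.range N, φ n * ψ n := by
    have step : ∀ i ∈ Finset.Iic (N + b),
        ∑ j ∈ Finset.Iic (N + b), (if i < N then φ i * (Q i j * ψ j) else 0)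
        = if i < N then φ i * (x * ψ i) else 0 := by
      intro i _
      by_cases h : i < N
      · simp only [if_pos h]
        rw [← Finset.mul_sum, h2 i h]
      · simp [h]
    rw [Finset.sum_congr rfl step, ← Finset.sum_filter, hfilter, Finset.mul_sum]
    exact Finset.sum_congr rfl (fun n _ => by ring)
  have hB : ∑ i ∈ Finset.Iic (N + b), ∑ j ∈ Finset.Iic (N + b),
      (if j < N then φ i * Q i j * ψ j else 0)
      = x' * ∑ n ∈ Finset.range N, φ n * ψ n := by
    rw [Finset.sum_comm]
    have step : ∀ j ∈ Finset.Iic (N + b),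
        ∑ i ∈ Finset.Iic (N + b), (if j < N then φ i * Q i j * ψ j else 0)
        = if j < N then x' * φ j * ψ j else 0 := by
      intro j _
      by_cases h : j < N
      · simp only [if_pos h]
        rw [← Finset.sum_mul, h1 j h]
      · simp [h]
    rw [Finset.sum_congr rfl step, ← Finset.sum_filter, hfilter, Finset.mul_sum]
    exact Finset.sum_congr rfl (fun n _ => by ring)
  have key : ∑ i ∈ Finset.Iic (N + b), ∑ j ∈ Finset.Iic (N + b),
      φ i * ((if i < N then Q i j else 0) - (if j < N then Q i j else 0)) * ψ j
      = x * (∑ n ∈ Finset.range N, φ n * ψ n) - x' * (∑ n ∈ Finset.range N, φ n * ψ n) := by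
    calc _ = ∑ i ∈ Finset.Iic (N + b), ∑ j ∈ Finset.Iic (N + b),
        ((if i < N then φ i * (Q i j * ψ j) else 0)
          - (if j < N then φ i * Q i j * ψ j else 0)) := by
          exact Finset.sum_congr rfl fun i _ => Finset.sum_congr rfl fun j _ => hsummand i j
      _ = _ := by simp only [Finset.sum_sub_distrib]; rw [hA, hB]
  rw [key]
  ring
end
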